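/- arXiv:2303.05507 — 4 statements merged into one kernel-verified Lean document; each statement's English description precedes it below -/
import Mathlib

section
/- If L is a list assignment for the edges of a cycle C in which every edge has a list of size at least two and not all edges have the same list, then C has a proper edge coloring using colors from the lists. -/
/-!
Index the edges of the cycle as `s(k, k + 1)` with `k : Fin n` (arithmetic mod `n`), and write
`T k` for the list of edge `k`.
If `T (k + 1) ⊆ T k` for every `k`, going once around the cycle shows that all lists are equal;
so some `T (i + 1)` contains a colour `c ∉ T i`. Give edge `i + 1` the colour `c` and colour the
edges `i + 2, i + 3, …, i` greedily, each avoiding the colour of its predecessor, which is possible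
since every list has two colours. The last edge `i` also differs from edge `i + 1`, because
`c ∉ T i`.
-/
open SimpleGraph

variable {V : Type*}

/-- Two edges of `G` are adjacent if both are edges, they are distinct,
and they share a vertex. -/
def EdgeAdj (G : SimpleGraph V) (e f : Sym2 V) : Prop :=
  e ∈ G.edgeSet ∧ f ∈ G.edgeSet ∧ e ≠ f ∧ ∃ v, v ∈ e ∧ v ∈ f

/-- A proper edge coloring (with natural-number colors). -/
def IsProperEdgeColoring (G : SimpleGraph V) (C : Sym2 V → ℕ) : Prop :=
  ∀ ⦃e f⦄, EdgeAdj G e f → C e ≠ C f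

/-- A partial proper edge coloring: colored edges are edges of `G`, and
adjacent colored edges receive distinct colors. -/
def IsPartialProperEdgeColoring (G : SimpleGraph V) (φ : Sym2 V → Option ℕ) : Prop :=
  (∀ e, φ e ≠ none → e ∈ G.edgeSet) ∧
  ∀ ⦃e f⦄, EdgeAdj G e f → φ e ≠ none → φ e ≠ φ f

/-- The partial coloring uses colors from `{0, ..., t-1}`. -/
def UsesColors (φ : Sym2 V → Option ℕ) (t : ℕ) : Prop :=
  ∀ e a, φ e = some a → a < t

/-- The (total) coloring uses colors from `{0, ..., t-1}` on all edges of `G`. -/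
def ColorsBelow (G : SimpleGraph V) (C : Sym2 V → ℕ) (t : ℕ) : Prop :=
  ∀ e ∈ G.edgeSet, C e < t

/-- `C` agrees with the partial coloring `φ` on all precolored edges. -/
def ExtendsColoring (C : Sym2 V → ℕ) (φ : Sym2 V → Option ℕ) : Prop :=
  ∀ e a, φ e = some a → C e = a

/-- `φ` extends to a proper edge coloring of `G` with `t` colors. -/
def Extendable (G : SimpleGraph V) (φ : Sym2 V → Option ℕ) (t : ℕ) : Prop :=
  ∃ C, IsProperEdgeColoring G C ∧ ColorsBelow G C t ∧ ExtendsColoring C φ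

/-- The set of precolored edges of `φ`. -/
def Precolored (φ : Sym2 V → Option ℕ) : Set (Sym2 V) := {e | φ e ≠ none}

/-- The chromatic index: least `t` admitting a proper edge coloring with `t` colors. -/
noncomputable def chromaticIndex (G : SimpleGraph V) : ℕ :=
  sInf {t | ∃ C, IsProperEdgeColoring G C ∧ ColorsBelow G C t}

/-- A set of edges is independent (a matching) if no two distinct members share a vertex. -/
def IndependentEdges (S : Set (Sym2 V)) : Prop :=
  ∀ e ∈ S, ∀ f ∈ S, e ≠ f → ∀ v, v ∈ e → v ∉ f

open Finset
open scoped Fin.CommRing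

section CyclicChoice

variable {α : Type*}

lemma exists_seq_mem_and_succ_ne (T : ℕ → Finset α) (hT : ∀ m, 2 ≤ #(T m)) {c : α}
    (hc : c ∈ T 0) :
    ∃ g : ℕ → α, g 0 = c ∧ (∀ m, g m ∈ T m) ∧ ∀ m, g (m + 1) ≠ g m := by
  choose next hnext_mem hnext_ne using fun m => exists_mem_ne (hT m)
  let g : ℕ → α := fun m => Nat.rec c (fun m x => next (m + 1) x) m
  refine ⟨g, rfl, fun m => ?_, fun m => hnext_ne _ _⟩
  cases m with
  | zero => exact hc
  | succ m => exact hnext_mem _ _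

lemma exists_cyclic_mem_and_succ_ne_of_notMem_last {N : ℕ} (T : Fin (N + 1) → Finset α)
    (hT : ∀ k, 2 ≤ #(T k)) {c : α} (hc : c ∈ T 0) (hc' : c ∉ T (Fin.last N)) :
    ∃ g : Fin (N + 1) → α, (∀ k, g k ∈ T k) ∧ ∀ k, g k ≠ g (k + 1) := by
  obtain ⟨h, h0, hmem, hne⟩ :=
    exists_seq_mem_and_succ_ne (fun m => T m) (fun m => hT _) (by simpa using hc)
  refine ⟨fun k => h k, fun k => by simpa using hmem k, fun k => ?_⟩
  rcases (Fin.le_last k).lt_or_eq with hk | rfl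
  · simp only [Fin.val_add_one_of_lt hk]
    exact (hne k).symm
  · -- the chain closes up because its first colour `c` is not available on the last edge
    show h (Fin.last N) ≠ h (Fin.last N + 1 : Fin (N + 1))
    rw [Fin.last_add_one, Fin.val_zero, h0]
    exact ne_of_mem_of_not_mem (by simpa using hmem (Fin.last N)) hc'

lemma exists_cyclic_mem_and_succ_ne_of_notMem {N : ℕ} (T : Fin (N + 1) → Finset α)
    (hT : ∀ k, 2 ≤ #(T k)) {i : Fin (N + 1)} {c : α} (hc : c ∈ T (i + 1)) (hc' : c ∉ T i) :
    ∃ g : Fin (N + 1) → α, (∀ k, g k ∈ T k) ∧ ∀ k, g k ≠ g (k + 1) := by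
  have hlast : Fin.last N + (i + 1) = i := by
    rw [← add_assoc, add_comm _ i, add_assoc, Fin.last_add_one, add_zero]
  obtain ⟨g, hmem, hne⟩ := exists_cyclic_mem_and_succ_ne_of_notMem_last (fun k => T (k + (i + 1)))
    (fun k => hT _) (c := c) (by simpa using hc) (by simpa [hlast] using hc')
  refine ⟨fun k => g (k - (i + 1)), fun k => by simpa using hmem (k - (i + 1)), fun k => ?_⟩
  have hk : k - (i + 1) + 1 = k + 1 - (i + 1) := by ring
  simpa only [hk, sub_add_cancel] using hne (k - (i + 1))

lemma eq_of_forall_succ_subset {N : ℕ} {T : Fin (N + 1) → Finset α} (hT : ∀ k, T (k + 1) ⊆ T k)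
    (j k : Fin (N + 1)) : T j = T k := by
  have hsub : ∀ (m : ℕ) (k : Fin (N + 1)), T (k + m) ⊆ T k := by
    intro m k
    induction m with
    | zero => simp
    | succ m ih =>
      refine (?_ : T (k + (m + 1 : ℕ)) ⊆ T (k + m)).trans ih
      simpa [add_assoc] using hT (k + m)
  have hsub' (j k : Fin (N + 1)) : T j ⊆ T k := by
    simpa using hsub (j - k).val k
  exact (hsub' j k).antisymm (hsub' k j)

lemma exists_cyclic_mem_and_succ_ne {N : ℕ} (T : Fin (N + 1) → Finset α) (hT : ∀ k, 2 ≤ #(T k))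
    (hne : ∃ j k, T j ≠ T k) :
    ∃ g : Fin (N + 1) → α, (∀ k, g k ∈ T k) ∧ ∀ k, g k ≠ g (k + 1) := by
  obtain ⟨j, k, hjk⟩ := hne
  obtain ⟨i, hi⟩ : ∃ i, ¬ T (i + 1) ⊆ T i := by
    by_contra! h
    exact hjk (eq_of_forall_succ_subset h j k)
  obtain ⟨c, hc, hc'⟩ := not_subset.mp hi
  exact exists_cyclic_mem_and_succ_ne_of_notMem T hT hc hc'

end CyclicChoice

section CycleGraph

variable {n : ℕ}

lemma cycleGraph_succ_mem_edgeSet (k : Fin (n + 2)) :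
    s(k, k + 1) ∈ (cycleGraph (n + 2)).edgeSet :=
  cycleGraph_adj.mpr (Or.inr (by ring))

lemma exists_eq_of_mem_edgeSet_cycleGraph {e : Sym2 (Fin (n + 2))}
    (he : e ∈ (cycleGraph (n + 2)).edgeSet) : ∃ k, e = s(k, k + 1) := by
  induction e using Sym2.ind with
  | h u v =>
    rcases (cycleGraph_adj.mp he : u - v = 1 ∨ v - u = 1) with h | h
    · exact ⟨v, by rw [← h, add_sub_cancel, Sym2.eq_swap]⟩
    · exact ⟨u, by rw [← h, add_sub_cancel]⟩

lemma cycleGraph_succ_edge_injective :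
    Function.Injective fun k : Fin (n + 3) => s(k, k + 1) := by
  intro j k hjk
  rcases Sym2.eq_iff.mp hjk with ⟨h, -⟩ | ⟨rfl, h⟩
  · exact h
  · have h2 : ((1 + 1 : Fin (n + 3)) : ℕ) = 2 := by
      simp [Fin.val_add, Nat.mod_eq_of_lt (show 2 < n + 3 by omega)]
    rw [add_assoc, add_eq_left] at h
    simp [h] at h2

lemma isProperEdgeColoring_cycleGraph {C : Sym2 (Fin (n + 2)) → ℕ}
    (hC : ∀ k, C s(k, k + 1) ≠ C s(k + 1, k + 1 + 1)) :
    IsProperEdgeColoring (cycleGraph (n + 2)) C := by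
  rintro e f ⟨he, hf, hef, v, hve, hvf⟩
  obtain ⟨k, rfl⟩ := exists_eq_of_mem_edgeSet_cycleGraph he
  obtain ⟨j, rfl⟩ := exists_eq_of_mem_edgeSet_cycleGraph hf
  rcases Sym2.mem_iff.mp hve with rfl | rfl <;> rcases Sym2.mem_iff.mp hvf with h | h
  · exact absurd (by rw [h]) hef
  · rw [h]; exact (hC j).symm
  · rw [← h]; exact hC k
  · exact absurd (by rw [add_right_cancel h]) hef

end CycleGraph

theorem stmt1 (n : ℕ) (hn : 3 ≤ n) (L : Sym2 (Fin n) → Finset ℕ)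
    (h₂ : ∀ e ∈ (cycleGraph n).edgeSet, 2 ≤ (L e).card)
    (hne : ¬ ∀ e ∈ (cycleGraph n).edgeSet, ∀ f ∈ (cycleGraph n).edgeSet, L e = L f) :
    ∃ C : Sym2 (Fin n) → ℕ, IsProperEdgeColoring (cycleGraph n) C ∧
      ∀ e ∈ (cycleGraph n).edgeSet, C e ∈ L e := by
  obtain ⟨m, rfl⟩ : ∃ m, n = m + 3 := ⟨n - 3, by omega⟩
  let T : Fin (m + 3) → Finset ℕ := fun k => L s(k, k + 1)
  have hT_ne : ∃ j k, T j ≠ T k := by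
    push Not at hne
    obtain ⟨e, he, f, hf, hef⟩ := hne
    obtain ⟨j, rfl⟩ := exists_eq_of_mem_edgeSet_cycleGraph he
    obtain ⟨k, rfl⟩ := exists_eq_of_mem_edgeSet_cycleGraph hf
    exact ⟨j, k, hef⟩
  obtain ⟨g, hg_mem, hg_ne⟩ :=
    exists_cyclic_mem_and_succ_ne T (fun k => h₂ _ (cycleGraph_succ_mem_edgeSet k)) hT_ne
  let C := Function.extend (fun k : Fin (m + 3) => s(k, k + 1)) g 0
  have hC (k : Fin (m + 3)) : C s(k, k + 1) = g k :=
    cycleGraph_succ_edge_injective.extend_apply g 0 k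
  refine ⟨C, isProperEdgeColoring_cycleGraph fun k => by simpa only [hC] using hg_ne k, ?_⟩
  intro e he
  obtain ⟨k, rfl⟩ := exists_eq_of_mem_edgeSet_cycleGraph he
  rw [hC]
  exact hg_mem k
end

section
/- Every partial proper edge coloring of an odd cycle C_{2n+1} using 3 colors can be extended to a proper 3-edge coloring of C_{2n+1}. -/
open SimpleGraph

variable {V : Type*}

/-! Every edge `s(i, i + 1)` of a cycle meets only `s(i - 1, i)` and `s(i + 1, i + 2)`, so at each
uncolored edge at most two of the three colors are blocked by precolored neighbours. Coloring the
uncolored edges one at a time with a free color therefore never gets stuck, and once every edge is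
colored the coloring is proper. -/

lemma EdgeAdj.symm {G : SimpleGraph V} {e f : Sym2 V} (h : EdgeAdj G e f) : EdgeAdj G f e := by
  obtain ⟨he, hf, hne, v, hve, hvf⟩ := h
  exact ⟨hf, he, hne.symm, v, hvf, hve⟩

section Greedy

variable {G : SimpleGraph V} {φ : Sym2 V → Option ℕ} {t : ℕ}

lemma exists_color_lt_forall_ne (φ : Sym2 V → Option ℕ) {s : Finset (Sym2 V)} (hs : s.card < t) :
    ∃ a < t, ∀ f ∈ s, φ f ≠ some a := by
  classical
  have hcard : (s.image fun f => (φ f).getD t).card < (Finset.range t).card :=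
    Finset.card_image_le.trans_lt (by simpa using hs)
  obtain ⟨a, ha, haφ⟩ := Finset.exists_mem_notMem_of_card_lt_card hcard
  refine ⟨a, Finset.mem_range.mp ha, fun f hf hfa => haφ ?_⟩
  exact Finset.mem_image.mpr ⟨f, hf, by simp [hfa]⟩

lemma extendable_of_forall_precolored (hφ : IsPartialProperEdgeColoring G φ)
    (hc : UsesColors φ t) (hall : ∀ e ∈ G.edgeSet, φ e ≠ none) : Extendable G φ t := by
  refine ⟨fun e => (φ e).getD 0, ?_, ?_, ?_⟩
  · intro e f hef hC
    obtain ⟨a, ha⟩ := Option.ne_none_iff_exists'.mp (hall e hef.1)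
    obtain ⟨b, hb⟩ := Option.ne_none_iff_exists'.mp (hall f hef.2.1)
    simp only [ha, hb, Option.getD_some] at hC
    exact hφ.2 hef (by simp [ha]) (by rw [ha, hb, hC])
  · intro e he
    obtain ⟨a, ha⟩ := Option.ne_none_iff_exists'.mp (hall e he)
    simpa [ha] using hc e a ha
  · intro e a ha
    simp [ha]

variable [DecidableEq (Sym2 V)]

lemma IsPartialProperEdgeColoring.update (hφ : IsPartialProperEdgeColoring G φ) {e : Sym2 V}
    (he : e ∈ G.edgeSet) {a : ℕ} (hfree : ∀ f, EdgeAdj G e f → φ f ≠ some a) :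
    IsPartialProperEdgeColoring G (Function.update φ e (some a)) := by
  refine ⟨fun f hf => ?_, fun f g hfg hf => ?_⟩
  · by_cases hfe : f = e
    · exact hfe ▸ he
    · exact hφ.1 f (by simpa [hfe] using hf)
  · by_cases hfe : f = e
    · subst hfe
      simpa [Ne.symm hfg.2.2.1] using (hfree g hfg).symm
    · by_cases hge : g = e
      · subst hge
        simpa [hfe] using hfree f hfg.symm
      · simp only [Function.update_of_ne hfe, Function.update_of_ne hge] at hf ⊢
        exact hφ.2 hfg hf

lemma UsesColors.update (hc : UsesColors φ t) (e : Sym2 V) {a : ℕ} (ha : a < t) :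
    UsesColors (Function.update φ e (some a)) t := by
  intro f b hf
  by_cases hfe : f = e
  · subst hfe
    simp only [Function.update_self, Option.some.injEq] at hf
    exact hf ▸ ha
  · exact hc f b (by simpa [hfe] using hf)

lemma ExtendsColoring.of_update {C : Sym2 V → ℕ} {e : Sym2 V} (he : φ e = none) {a : ℕ}
    (hC : ExtendsColoring C (Function.update φ e (some a))) : ExtendsColoring C φ := by
  intro f b hf
  have hfe : f ≠ e := by rintro rfl; simp [he] at hf
  exact hC f b (by simpa [hfe] using hf)

theorem extendable_of_few_adjacent_edges (hfin : G.edgeSet.Finite)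
    (hadj : ∀ e ∈ G.edgeSet, ∃ s : Finset (Sym2 V), s.card < t ∧ ∀ f, EdgeAdj G e f → f ∈ s)
    (hφ : IsPartialProperEdgeColoring G φ) (hc : UsesColors φ t) : Extendable G φ t := by
  suffices key : ∀ U : Finset (Sym2 V), ∀ φ, IsPartialProperEdgeColoring G φ → UsesColors φ t →
      (∀ e ∈ G.edgeSet, φ e = none → e ∈ U) → Extendable G φ t from
    key hfin.toFinset φ hφ hc fun e he _ => hfin.mem_toFinset.mpr he
  intro U
  induction U using Finset.induction_on with
  | empty =>
    intro φ hφ hc hU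
    exact extendable_of_forall_precolored hφ hc fun e he hnone => by simpa using hU e he hnone
  | insert e U _ ih =>
    intro φ hφ hc hU
    by_cases hunc : e ∈ G.edgeSet ∧ φ e = none
    · obtain ⟨he, hnone⟩ := hunc
      obtain ⟨s, hs, hsadj⟩ := hadj e he
      obtain ⟨a, hat, hfree⟩ := exists_color_lt_forall_ne φ hs
      obtain ⟨C, hCp, hCt, hCφ⟩ := ih (Function.update φ e (some a))
        (hφ.update he fun f hef => hfree f (hsadj f hef)) (hc.update e hat) fun f hf hfnone => by
          have hfe : f ≠ e := by rintro rfl; simp at hfnone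
          exact (Finset.mem_insert.mp (hU f hf (by simpa [hfe] using hfnone))).resolve_left hfe
      exact ⟨C, hCp, hCt, hCφ.of_update hnone⟩
    · refine ih φ hφ hc fun f hf hfnone => ?_
      have hfe : f ≠ e := by rintro rfl; exact hunc ⟨hf, hfnone⟩
      exact (Finset.mem_insert.mp (hU f hf hfnone)).resolve_left hfe

end Greedy

section Cycle

variable {m : ℕ} [NeZero m]

lemma eq_add_one_or_eq_add_one_of_cycleGraph_adj {u v : Fin m} (h : (cycleGraph m).Adj u v) :
    u = v + 1 ∨ v = u + 1 := by
  have hone : ∀ w : Fin m, w.val = 1 → w = 1 := fun w hw =>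
    Fin.ext (by rw [hw, Fin.val_one', Nat.mod_eq_of_lt (hw ▸ w.isLt)])
  rcases cycleGraph_adj'.mp h with h | h
  · exact Or.inl (sub_eq_iff_eq_add'.mp (hone _ h))
  · exact Or.inr (sub_eq_iff_eq_add'.mp (hone _ h))

lemma cycleGraph_exists_eq_of_mem_edgeSet {e : Sym2 (Fin m)} (he : e ∈ (cycleGraph m).edgeSet) :
    ∃ i, e = s(i, i + 1) := by
  induction e using Sym2.inductionOn with
  | hf u v =>
    rcases eq_add_one_or_eq_add_one_of_cycleGraph_adj ((mem_edgeSet _).mp he) with rfl | rfl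
    · exact ⟨v, Sym2.eq_swap⟩
    · exact ⟨u, rfl⟩

lemma eq_or_eq_of_cycleGraph_edgeAdj {i : Fin m} {f : Sym2 (Fin m)}
    (h : EdgeAdj (cycleGraph m) s(i, i + 1) f) :
    f = s(i - 1, i) ∨ f = s(i + 1, i + 1 + 1) := by
  obtain ⟨-, hf, hne, w, hwe, hwf⟩ := h
  obtain ⟨j, rfl⟩ := cycleGraph_exists_eq_of_mem_edgeSet hf
  have hji : j ≠ i := by rintro rfl; exact hne rfl
  simp only [Sym2.mem_iff] at hwe hwf
  rcases hwe with rfl | rfl <;> rcases hwf with hw | hw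
  · exact absurd hw.symm hji
  · left; rw [hw, add_sub_cancel_right]
  · right; rw [hw]
  · exact absurd (add_right_cancel hw).symm hji

lemma cycleGraph_adjacent_edges_card_lt_three (e : Sym2 (Fin m))
    (he : e ∈ (cycleGraph m).edgeSet) :
    ∃ s : Finset (Sym2 (Fin m)), s.card < 3 ∧ ∀ f, EdgeAdj (cycleGraph m) e f → f ∈ s := by
  obtain ⟨i, rfl⟩ := cycleGraph_exists_eq_of_mem_edgeSet he
  refine ⟨{s(i - 1, i), s(i + 1, i + 1 + 1)}, Finset.card_le_two.trans_lt (by norm_num),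
    fun f hf => ?_⟩
  rcases eq_or_eq_of_cycleGraph_edgeAdj hf with rfl | rfl <;> simp

end Cycle

theorem stmt3_general (n : ℕ) (φ : Sym2 (Fin (2*n+1)) → Option ℕ)
    (hφ : IsPartialProperEdgeColoring (cycleGraph (2*n+1)) φ) (hc : UsesColors φ 3) :
    Extendable (cycleGraph (2*n+1)) φ 3 :=
  extendable_of_few_adjacent_edges (Set.toFinite _) cycleGraph_adjacent_edges_card_lt_three hφ hc

theorem stmt3 (n : ℕ) (hn : 1 ≤ n) (φ : Sym2 (Fin (2*n+1)) → Option ℕ)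
    (hφ : IsPartialProperEdgeColoring (cycleGraph (2*n+1)) φ) (hc : UsesColors φ 3) :
    Extendable (cycleGraph (2*n+1)) φ 3 :=
  stmt3_general n φ hφ hc
end

section
/- If G is a connected Class 1 graph in which every partial proper edge coloring with Δ(G) colored edges is extendable to a proper Δ(G)-edge coloring, then G is isomorphic to a star K_{1,n}. -/
/-! Let `v` be a vertex of maximum degree `Δ`. If a neighbour `x` of `v` had a neighbour
`y ≠ v`, precolor `xy` together with the `Δ - 1` other edges at `v`, each with its own color:
all `Δ` colors are used on edges meeting `vx`, so no extension can color `vx`. Hence every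
neighbour of `v` is a leaf, and connectivity makes `G` a star centred at `v`. -/

open SimpleGraph

variable {V : Type*}

open Finset

section DistinctPrecoloring

variable [DecidableEq V] (S : Finset (Sym2 V))

noncomputable def distinctPrecoloring : Sym2 V → Option ℕ :=
  fun e => if h : e ∈ S then some (S.equivFin ⟨e, h⟩) else none

lemma precolored_distinctPrecoloring : Precolored (distinctPrecoloring S) = S := by
  ext e
  by_cases he : e ∈ S <;> simp [Precolored, distinctPrecoloring, he]

lemma distinctPrecoloring_symm_equivFin (k : Fin #S) :
    distinctPrecoloring S (S.equivFin.symm k) = some (k : ℕ) := by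
  simp [distinctPrecoloring]

lemma usesColors_distinctPrecoloring : UsesColors (distinctPrecoloring S) #S := by
  intro e a he
  unfold distinctPrecoloring at he
  split_ifs at he with h
  cases he
  exact Fin.is_lt _

lemma isPartialProperEdgeColoring_distinctPrecoloring {G : SimpleGraph V}
    (hS : ↑S ⊆ G.edgeSet) : IsPartialProperEdgeColoring G (distinctPrecoloring S) := by
  refine ⟨fun e he => hS ?_, fun e f hef hcol heq => hef.2.2.1 ?_⟩
  · rw [← precolored_distinctPrecoloring S]
    exact he
  · unfold distinctPrecoloring at hcol heq
    split_ifs at hcol heq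
    · simpa using S.equivFin.injective (Fin.val_injective (Option.some_inj.1 heq))
    · exact absurd rfl hcol

lemma not_extendable_distinctPrecoloring {G : SimpleGraph V} {e : Sym2 V} (he : e ∈ G.edgeSet)
    (hadj : ∀ f ∈ S, EdgeAdj G e f) : ¬Extendable G (distinctPrecoloring S) #S := by
  rintro ⟨C, hproper, hbelow, hextends⟩
  set f := S.equivFin.symm ⟨C e, hbelow e he⟩
  have hfe : C f = C e := hextends f _ (distinctPrecoloring_symm_equivFin S _)
  exact hproper (hadj f (S.equivFin.symm _).2) hfe.symm

end DistinctPrecoloring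

namespace SimpleGraph

variable {G : SimpleGraph V}

lemma Walk.eq_or_adj_of_forall_adj_adj {v w : V} (p : G.Walk w v)
    (h : ∀ x y, G.Adj v x → G.Adj x y → y = v) : w = v ∨ G.Adj v w := by
  induction p with
  | nil => exact .inl rfl
  | cons hab _ ih =>
    rcases ih h with rfl | hvb
    · exact .inr hab.symm
    · exact .inl (h _ _ hvb hab.symm)

lemma Connected.adj_iff_of_forall_adj_adj (hconn : G.Connected) {v : V}
    (h : ∀ x y, G.Adj v x → G.Adj x y → y = v) (a b : V) :
    G.Adj a b ↔ a ≠ b ∧ (a = v ∨ b = v) := by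
  have hcenter : ∀ w, w ≠ v → G.Adj v w := fun w hw =>
    ((hconn.preconnected w v).some.eq_or_adj_of_forall_adj_adj h).resolve_left hw
  refine ⟨fun hab => ⟨hab.ne, ?_⟩, ?_⟩
  · by_cases ha : a = v
    · exact .inl ha
    · exact .inr (h a b (hcenter a ha) hab)
  · rintro ⟨hab, rfl | rfl⟩
    · exact hcenter b hab.symm
    · exact (hcenter a hab).symm

variable [Fintype V] [DecidableEq V]

lemma nonempty_iso_completeBipartiteGraph_of_adj_iff (v : V)
    (h : ∀ a b, G.Adj a b ↔ a ≠ b ∧ (a = v ∨ b = v)) :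
    ∃ n : ℕ, Nonempty (G ≃g completeBipartiteGraph Unit (Fin n)) := by
  let star : completeBipartiteGraph {a // a = v} {a // ¬a = v} ≃g G :=
    { Equiv.sumCompl (· = v) with
      map_rel_iff' := by
        rintro (⟨a, rfl⟩ | ⟨a, ha⟩) (⟨b, hb⟩ | ⟨b, hb⟩) <;> simp [h] <;> grind }
  exact ⟨_, ⟨star.symm.trans
    (completeBipartiteGraphCongr (Equiv.ofUnique _ _) (Fintype.equivFin _))⟩⟩

lemma eq_of_adj_of_adj_of_forall_extendable [DecidableRel G.Adj]
    (hext : ∀ φ : Sym2 V → Option ℕ, IsPartialProperEdgeColoring G φ →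
      UsesColors φ G.maxDegree → (Precolored φ).ncard = G.maxDegree →
      Extendable G φ G.maxDegree)
    {v x y : V} (hv : G.degree v = G.maxDegree) (hvx : G.Adj v x) (hxy : G.Adj x y) : y = v := by
  by_contra hyv
  have hvxy : v ∉ s(x, y) := by simp [hvx.ne, Ne.symm hyv]
  set S := insert s(x, y) ((G.incidenceFinset v).erase s(v, x))
  have hmem : ∀ f ∈ S, f = s(x, y) ∨ f ≠ s(v, x) ∧ f ∈ G.edgeSet ∧ v ∈ f := by
    simp [S, mem_incidenceFinset, incidenceSet]
  have hsub : ↑S ⊆ G.edgeSet := by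
    intro f hf
    rcases hmem f hf with rfl | ⟨-, hf, -⟩
    exacts [hxy, hf]
  have hcard : #S = G.maxDegree := by
    have hvx_mem : s(v, x) ∈ G.incidenceFinset v := by simp [mem_incidenceFinset, hvx]
    have hxy_not_mem : s(x, y) ∉ (G.incidenceFinset v).erase s(v, x) := by
      simp [mem_incidenceFinset, incidenceSet, hvxy]
    rw [card_insert_of_notMem hxy_not_mem, card_erase_of_mem hvx_mem,
      card_incidenceFinset_eq_degree, ← hv]
    have := G.degree_pos_iff_exists_adj v |>.2 ⟨x, hvx⟩
    omega
  have hadj : ∀ f ∈ S, EdgeAdj G s(v, x) f := by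
    intro f hf
    rcases hmem f hf with rfl | ⟨hne, hf, hvf⟩
    · exact ⟨hvx, hxy, fun h => hvxy (h ▸ Sym2.mem_mk_left v x), x, by simp, by simp⟩
    · exact ⟨hvx, hf, Ne.symm hne, v, Sym2.mem_mk_left v x, hvf⟩
  refine not_extendable_distinctPrecoloring S hvx hadj (hcard ▸ hext _ ?_ ?_ ?_)
  · exact isPartialProperEdgeColoring_distinctPrecoloring S hsub
  · exact hcard ▸ usesColors_distinctPrecoloring S
  · rw [precolored_distinctPrecoloring, Set.ncard_coe_finset, hcard]

end SimpleGraph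

theorem stmt5_general [Fintype V] (G : SimpleGraph V) [DecidableRel G.Adj] (hconn : G.Connected)
    (hext : ∀ φ : Sym2 V → Option ℕ, IsPartialProperEdgeColoring G φ →
      UsesColors φ G.maxDegree → (Precolored φ).ncard = G.maxDegree →
      Extendable G φ G.maxDegree) :
    ∃ n : ℕ, Nonempty (G ≃g completeBipartiteGraph Unit (Fin n)) := by
  classical
  have := hconn.nonempty
  obtain ⟨v, hv⟩ := G.exists_maximal_degree_vertex
  have hleaves : ∀ x y, G.Adj v x → G.Adj x y → y = v := fun _ _ hvx hxy =>
    G.eq_of_adj_of_adj_of_forall_extendable hext hv.symm hvx hxy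
  exact G.nonempty_iso_completeBipartiteGraph_of_adj_iff v
    (hconn.adj_iff_of_forall_adj_adj hleaves)

theorem stmt5 [Fintype V] (G : SimpleGraph V) [DecidableRel G.Adj] (hconn : G.Connected)
    (hclass1 : chromaticIndex G = G.maxDegree)
    (hext : ∀ φ : Sym2 V → Option ℕ, IsPartialProperEdgeColoring G φ →
      UsesColors φ G.maxDegree → (Precolored φ).ncard = G.maxDegree →
      Extendable G φ G.maxDegree) :
    ∃ n : ℕ, Nonempty (G ≃g completeBipartiteGraph Unit (Fin n)) :=
  stmt5_general G hconn hext
end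

section
/- For every n ≥ 1 there is a partial proper edge coloring of two edges of C_{2n+1} □ K_2 using colors {1,2,3} that cannot be extended to a proper 3-edge coloring of C_{2n+1} □ K_2: namely, color two corresponding edges of the two copies of C_{2n+1} with colors 1 and 2 respectively. -/
/-!
In a proper 3-edge-coloring of `C_N □ K_2`, the two cycle edges at vertex `i + 1` of one copy and
the two at vertex `i + 1` of the other copy all avoid the color of the rung joining these
vertices, so both pairs carry the same two colors. Hence if the corresponding edges `(i, i + 1)`
of the two copies get different colors, so do the edges `(i + 1, i + 2)`, with the two colors
swapped. Precoloring the edges `(0, 1)` with different colors, the colors get swapped at each of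
the `N` steps around the cycle, which for odd `N` brings the pair back swapped: a contradiction.
-/

open SimpleGraph

variable {V : Type*}

section ThreeEdgeColoring

variable {G : SimpleGraph V} {C : Sym2 V → ℕ}

theorem IsProperEdgeColoring.apply_ne (hC : IsProperEdgeColoring G C) {u v w : V}
    (hv : G.Adj u v) (hw : G.Adj u w) (hvw : v ≠ w) : C s(u, v) ≠ C s(u, w) :=
  hC ⟨hv, hw, fun h => hvw (Sym2.congr_right.mp h), u, Sym2.mem_mk_left u v,
    Sym2.mem_mk_left u w⟩

/-- Both ends of `uu'` miss the color of `uu'`, so with three colors the other two edges at `u`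
and the other two edges at `u'` carry the same pair of colors. -/
theorem IsProperEdgeColoring.colors_eq_or_swap (hC : IsProperEdgeColoring G C)
    (hB : ColorsBelow G C 3) {u u' v w v' w' : V} (huu' : G.Adj u u')
    (hv : G.Adj u v) (hw : G.Adj u w) (hv' : G.Adj u' v') (hw' : G.Adj u' w')
    (hvw : v ≠ w) (hv'w' : v' ≠ w') (hvu' : v ≠ u') (hwu' : w ≠ u') (hv'u : v' ≠ u)
    (hw'u : w' ≠ u) :
    C s(u, v) = C s(u', v') ∧ C s(u, w) = C s(u', w') ∨
      C s(u, v) = C s(u', w') ∧ C s(u, w) = C s(u', v') := by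
  have h₁ := hC.apply_ne hv hw hvw
  have h₂ := hC.apply_ne hv huu' hvu'
  have h₃ := hC.apply_ne hw huu' hwu'
  have h₄ := hC.apply_ne hv' hw' hv'w'
  have h₅ := hC.apply_ne hv' huu'.symm hv'u
  have h₆ := hC.apply_ne hw' huu'.symm hw'u
  rw [Sym2.eq_swap (a := u') (b := u)] at h₅ h₆
  have := hB s(u, v) hv; have := hB s(u, w) hw; have := hB s(u', v') hv'
  have := hB s(u', w') hw'; have := hB s(u, u') huu'
  omega

end ThreeEdgeColoring

theorem eq_of_swap_of_odd_period {α : Type*} {a b : ℕ → α} {N : ℕ} (hN : Odd N)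
    (ha : a N = a 0) (hswap : ∀ k, a k ≠ b k → a (k + 1) = b k ∧ b (k + 1) = a k) :
    a 0 = b 0 := by
  by_contra h₀
  have alternate : ∀ k, (Even k ∧ a k = a 0 ∧ b k = b 0) ∨ (Odd k ∧ a k = b 0 ∧ b k = a 0) := by
    intro k
    induction k with
    | zero => exact .inl ⟨Even.zero, rfl, rfl⟩
    | succ k ih =>
      rcases ih with ⟨hk, hak, hbk⟩ | ⟨hk, hak, hbk⟩
      · obtain ⟨ha', hb'⟩ := hswap k (by rwa [hak, hbk])
        exact .inr ⟨hk.add_one, ha'.trans hbk, hb'.trans hak⟩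
      · obtain ⟨ha', hb'⟩ := hswap k (by rw [hak, hbk]; exact Ne.symm h₀)
        exact .inl ⟨hk.add_one, ha'.trans hbk, hb'.trans hak⟩
  rcases alternate N with ⟨hE, -, -⟩ | ⟨-, haN, -⟩
  · exact Nat.not_even_iff_odd.mpr hN hE
  · exact h₀ (ha.symm.trans haN)

section Prism

variable {N : ℕ}

abbrev prismGraph (N : ℕ) : SimpleGraph (Fin N × Fin 2) :=
  (cycleGraph N).boxProd (⊤ : SimpleGraph (Fin 2))

theorem prismGraph_adj_rung (i : Fin N) : (prismGraph N).Adj (i, 0) (i, 1) :=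
  boxProd_adj_right.mpr (by decide)

variable [NeZero N]

def cycleEdge (j : Fin 2) (i : Fin N) : Sym2 (Fin N × Fin 2) :=
  s((i, j), (i + 1, j))

theorem prismGraph_adj_succ (hN : 2 ≤ N) (i : Fin N) (j : Fin 2) :
    (prismGraph N).Adj (i, j) (i + 1, j) :=
  boxProd_adj_left.mpr <| cycleGraph_adj'.mpr <| .inr <| by
    rw [add_sub_cancel_left, Fin.val_one', Nat.mod_eq_of_lt hN]

theorem Fin.ne_add_one_add_one (hN : 3 ≤ N) (i : Fin N) : i ≠ i + 1 + 1 := by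
  rw [add_assoc, ne_eq, left_eq_add, Fin.ext_iff, Fin.val_add, Fin.val_one', Fin.val_zero,
    Nat.mod_eq_of_lt (show 1 < N by omega), Nat.mod_eq_of_lt hN]
  omega

theorem IsProperEdgeColoring.cycleEdge_swap (hN : 3 ≤ N) {C : Sym2 (Fin N × Fin 2) → ℕ}
    (hC : IsProperEdgeColoring (prismGraph N) C) (hB : ColorsBelow (prismGraph N) C 3)
    (i : Fin N) (h : C (cycleEdge 0 i) ≠ C (cycleEdge 1 i)) :
    C (cycleEdge 0 (i + 1)) = C (cycleEdge 1 i) ∧ C (cycleEdge 1 (i + 1)) = C (cycleEdge 0 i) := by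
  have hN2 : 2 ≤ N := by omega
  have := hC.colors_eq_or_swap hB (prismGraph_adj_rung (i + 1)) (prismGraph_adj_succ hN2 i 0).symm
    (prismGraph_adj_succ hN2 (i + 1) 0) (prismGraph_adj_succ hN2 i 1).symm (prismGraph_adj_succ hN2 (i + 1) 1)
    (by simpa using Fin.ne_add_one_add_one hN i) (by simpa using Fin.ne_add_one_add_one hN i)
    (by simp) (by simp) (by simp) (by simp)
  rw [Sym2.eq_swap (a := (i + 1, 0)) (b := (i, 0)), Sym2.eq_swap (a := (i + 1, 1)) (b := (i, 1))]
    at this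
  unfold cycleEdge at h ⊢
  tauto

open Fin.NatCast in
theorem IsProperEdgeColoring.cycleEdge_zero_eq (hN : 3 ≤ N) (hodd : Odd N)
    {C : Sym2 (Fin N × Fin 2) → ℕ}
    (hC : IsProperEdgeColoring (prismGraph N) C) (hB : ColorsBelow (prismGraph N) C 3) :
    C s((0, 0), (1, 0)) = C s((0, 1), (1, 1)) := by
  simpa [cycleEdge] using
    eq_of_swap_of_odd_period (a := fun k : ℕ => C (cycleEdge 0 k))
      (b := fun k : ℕ => C (cycleEdge 1 k)) hodd (by simp)
      (fun k h => by simpa [Nat.cast_succ] using hC.cycleEdge_swap hN hB k h)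

end Prism

section PairPrecoloring

variable [DecidableEq V] {G : SimpleGraph V} {e₀ e₁ : Sym2 V} {c₀ c₁ : ℕ}

def pairPrecoloring (e₀ e₁ : Sym2 V) (c₀ c₁ : ℕ) : Sym2 V → Option ℕ :=
  fun e => if e = e₀ then some c₀ else if e = e₁ then some c₁ else none

theorem precolored_pairPrecoloring : Precolored (pairPrecoloring e₀ e₁ c₀ c₁) = {e₀, e₁} := by
  ext e
  simp only [Precolored, pairPrecoloring, Set.mem_ofPred_eq, Set.mem_insert_iff,
    Set.mem_singleton_iff]
  split_ifs <;> simp_all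

theorem usesColors_pairPrecoloring {t : ℕ} (h₀ : c₀ < t) (h₁ : c₁ < t) :
    UsesColors (pairPrecoloring e₀ e₁ c₀ c₁) t := by
  intro e c he
  unfold pairPrecoloring at he
  split_ifs at he <;> grind

theorem isPartialProperEdgeColoring_pairPrecoloring (h₀ : e₀ ∈ G.edgeSet) (h₁ : e₁ ∈ G.edgeSet)
    (hc : c₀ ≠ c₁) : IsPartialProperEdgeColoring G (pairPrecoloring e₀ e₁ c₀ c₁) := by
  constructor
  · intro e he
    unfold pairPrecoloring at he
    split_ifs at he with he₀ he₁
    · exact he₀ ▸ h₀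
    · exact he₁ ▸ h₁
    · exact absurd rfl he
  · intro e f hef he
    have hne := hef.2.2.1
    unfold pairPrecoloring at he ⊢
    split_ifs <;> simp_all [Ne.symm hc]

theorem ExtendsColoring.eq_of_pairPrecoloring {C : Sym2 V → ℕ}
    (hC : ExtendsColoring C (pairPrecoloring e₀ e₁ c₀ c₁)) (he : e₀ ≠ e₁) :
    C e₀ = c₀ ∧ C e₁ = c₁ :=
  ⟨hC e₀ c₀ (by simp [pairPrecoloring]), hC e₁ c₁ (by simp [pairPrecoloring, he.symm])⟩

end PairPrecoloring

theorem stmt18 (n : ℕ) (hn : 1 ≤ n) :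
    ∃ φ : Sym2 (Fin (2*n+1) × Fin 2) → Option ℕ,
      φ = (fun e =>
        if e = s(((0 : Fin (2*n+1)), (0 : Fin 2)), ((1 : Fin (2*n+1)), (0 : Fin 2))) then some 0
        else if e = s(((0 : Fin (2*n+1)), (1 : Fin 2)), ((1 : Fin (2*n+1)), (1 : Fin 2))) then some 1
        else none) ∧
      IsPartialProperEdgeColoring ((cycleGraph (2*n+1)).boxProd (⊤ : SimpleGraph (Fin 2))) φ ∧
      UsesColors φ 3 ∧ (Precolored φ).ncard = 2 ∧
      ¬ Extendable ((cycleGraph (2*n+1)).boxProd (⊤ : SimpleGraph (Fin 2))) φ 3 := by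
  have hN : 3 ≤ 2 * n + 1 := by omega
  have hne : s(((0 : Fin (2 * n + 1)), (0 : Fin 2)), ((1 : Fin (2 * n + 1)), (0 : Fin 2))) ≠
      s((0, 1), (1, 1)) := by
    simp [Prod.ext_iff]
  have hadj (j : Fin 2) : (prismGraph (2 * n + 1)).Adj (0, j) (1, j) := by
    simpa using prismGraph_adj_succ (N := 2 * n + 1) (by omega) 0 j
  refine ⟨pairPrecoloring _ _ 0 1, rfl,
    isPartialProperEdgeColoring_pairPrecoloring (hadj 0) (hadj 1) zero_ne_one,
    usesColors_pairPrecoloring (by norm_num) (by norm_num),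
    by rw [precolored_pairPrecoloring, Set.ncard_pair hne], ?_⟩
  rintro ⟨C, hC, hB, hext⟩
  obtain ⟨h₀, h₁⟩ := hext.eq_of_pairPrecoloring hne
  have := hC.cycleEdge_zero_eq hN (odd_two_mul_add_one n) hB
  omega
end
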